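/- arXiv:1401.0119 — 4 statements merged into one kernel-verified Lean document; each statement's English description precedes it below -/
import Mathlib

section
/- Let h_v(i) be the value of vertex v at iteration i of the simplified auction algorithm and let D_l(i) = {v ∈ V : h_v(i) ≥ l}. If v_0 ∈ D_l(i) and the edge (u, v_0) belongs to the matching M(i), then the entire neighbor set n_u of u is contained in D_{l-1}(i). -/
/-- A trace of the simplified auction algorithm on a bipartite graph with
parts `U`, `V` and edge set `E`.  `M i` is the partial matching and `h i` the
vector of vertex values at iteration `i`.  At each iteration, either all
persons are assigned (termination: nothing changes), or some free vertex
`u ∈ U` bids on a neighbor `j` of minimal value, `(u, j)` is added to the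
matching (unmatching `j`'s previous partner), and `h j` is incremented. -/
structure AuctionTrace (U V : Type*) (E : Set (U × V)) where
  M : ℕ → Set (U × V)
  h : ℕ → V → ℕ
  h_init : ∀ v, h 0 v = 0
  M_init : M 0 = ∅
  M_subset : ∀ i, M i ⊆ E
  step : ∀ i,
    ((∀ u, ∃ v, (u, v) ∈ M i) ∧ M (i + 1) = M i ∧ h (i + 1) = h i) ∨
    (∃ u j, (∀ v, (u, v) ∉ M i) ∧ (u, j) ∈ E ∧
      (∀ w, (u, w) ∈ E → h i j ≤ h i w) ∧
      M (i + 1) = insert (u, j) {e ∈ M i | e.2 ≠ j} ∧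
      h (i + 1) j = h i j + 1 ∧ ∀ w, w ≠ j → h (i + 1) w = h i w)


/-!
Matching `u` to `v` only happens when `v` has minimal value among the neighbours of `u`, and
`v` is then raised by one; afterwards values only grow, and `v` itself can only be raised again
by a bid that takes it away from `u`. Hence `h v ≤ h w + 1` for every neighbour `w` of `u`
as long as `(u, v)` is matched.
-/

namespace AuctionTrace

variable {U V : Type*} {E : Set (U × V)} (t : AuctionTrace U V E)

theorem h_le_h_succ (i : ℕ) (v : V) : t.h i v ≤ t.h (i + 1) v := by
  rcases t.step i with ⟨-, -, hh⟩ | ⟨-, j, -, -, -, -, hj, hother⟩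
  · rw [hh]
  · by_cases hv : v = j
    · subst hv; omega
    · rw [hother v hv]

theorem h_le_h_add_one_of_mem_M (i : ℕ) {u : U} {v w : V} (hM : (u, v) ∈ t.M i)
    (hE : (u, w) ∈ E) : t.h i v ≤ t.h i w + 1 := by
  induction i with
  | zero => simp [t.M_init] at hM
  | succ n ih =>
    have hw := t.h_le_h_succ n w
    rcases t.step n with ⟨-, hMeq, hh⟩ | ⟨u', j, -, -, hmin, hMeq, hj, hother⟩
    · rw [hMeq] at hM
      rw [hh]
      exact ih hM
    · rw [hMeq] at hM
      rcases hM with hbid | ⟨hMn, hvj⟩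
      · obtain ⟨rfl, rfl⟩ := Prod.mk.inj hbid
        have := hmin w hE
        omega
      · have := ih hMn
        have := hother v hvj
        omega

end AuctionTrace

/-- If `v₀ ∈ D_l(i)` (i.e. `l ≤ h i v₀`) and the edge `(u, v₀)`
belongs to the matching `M i`, then the entire neighbor set of `u` is contained
in `D_{l-1}(i)`, i.e. `l - 1 ≤ h i w` for every neighbor `w` of `u`. -/
theorem neighbors_in_D_pred {U V : Type*} (E : Set (U × V))
    (t : AuctionTrace U V E) (i l : ℕ) (u : U) (v0 : V)
    (hv0 : l ≤ t.h i v0) (hM : (u, v0) ∈ t.M i) :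
    ∀ w, (u, w) ∈ E → l - 1 ≤ t.h i w := by
  intro w hE
  have := t.h_le_h_add_one_of_mem_M i hM hE
  omega
end

section
/- Suppose G=(U,V,E) is bipartite with |U|=|V|=N, G contains a perfect matching, and for every non-perfect matching M ⊆ E there exists an augmenting path for M of length at most 2l+1. Then at every iteration i of the simplified auction algorithm before termination, every free vertex u ∈ U has at least one neighbor j ∈ n_u with h_j(i) ≤ l. -/
/-- `M` is a matching: edges are pairwise vertex-disjoint. -/
def IsMatching {U V : Type*} (M : Set (U × V)) : Prop :=
  (∀ u v v', (u, v) ∈ M → (u, v') ∈ M → v = v') ∧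
  (∀ u u' v, (u, v) ∈ M → (u', v) ∈ M → u = u')

/-- An augmenting path of length `2 * m + 1` with respect to the matching `M`
in the bipartite graph with edges `E`: vertices
`u 0, v 0, u 1, v 1, …, u m, v m`, where each `(u i, v i)` is a non-matching
edge, each `(u (i+1), v i)` is a matching edge, the start `u 0 ∈ U` and the
end `v m ∈ V` are free, and the vertices are pairwise distinct. -/
def IsAugPath {U V : Type*} (E M : Set (U × V)) (u : ℕ → U) (v : ℕ → V)
    (m : ℕ) : Prop :=
  (∀ w, (u 0, w) ∉ M) ∧ (∀ w, (w, v m) ∉ M) ∧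
  (∀ i ≤ m, (u i, v i) ∈ E ∧ (u i, v i) ∉ M) ∧
  (∀ i < m, (u (i + 1), v i) ∈ M) ∧
  (∀ i j, i ≤ m → j ≤ m → u i = u j → i = j) ∧
  (∀ i j, i ≤ m → j ≤ m → v i = v j → i = j)

/-!
The auction preserves three invariants: `M` is a matching, a free vertex of `V` has value `0`,
and a matched vertex `b` has value at most one more than any neighbour of its partner (it was
bought at a minimal value, and only its own value has risen since). Hence values drop by at
most one per edge along an augmenting path, so the start of an augmenting path of length
`2m + 1` has a neighbour of value at most `m`. If a free `u` had only neighbours of value above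
`l`, the short augmenting path granted by hypothesis starts elsewhere; letting its start bid
keeps `u` free, preserves the invariants and raises a value that is at most `l`, so the
potential `∑ v, (l + 1 - h v)` drops, and this cannot go on forever.
-/

section

variable {U V : Type*} {E M : Set (U × V)}

def bid (M : Set (U × V)) (u : U) (j : V) : Set (U × V) :=
  insert (u, j) {e ∈ M | e.2 ≠ j}

lemma mem_bid {u : U} {j : V} {e : U × V} :
    e ∈ bid M u j ↔ e = (u, j) ∨ e ∈ M ∧ e.2 ≠ j := by
  simp [bid]

lemma bid_subset {u : U} {j : V} (hM : M ⊆ E) (hj : (u, j) ∈ E) : bid M u j ⊆ E := by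
  rintro e (rfl | ⟨he, -⟩)
  exacts [hj, hM he]

lemma IsMatching.bid {u : U} {j : V} (hM : IsMatching M) (hu : ∀ w, (u, w) ∉ M) :
    IsMatching (bid M u j) := by
  constructor
  · rintro a b b' (⟨rfl, rfl⟩ | ⟨hb, -⟩) (⟨-, rfl⟩ | ⟨hb', -⟩)
    exacts [rfl, (hu _ hb').elim, (hu _ hb).elim, hM.1 a b b' hb hb']
  · rintro a a' b (⟨rfl, rfl⟩ | ⟨hb, hbj⟩) (⟨rfl, -⟩ | ⟨hb', hbj'⟩)
    exacts [rfl, (hbj' rfl).elim, (hbj rfl).elim, hM.2 a a' b hb hb']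

lemma notMem_bid_of_ne {u u' : U} {j : V} (hu' : ∀ w, (u', w) ∉ M) (hne : u' ≠ u) :
    ∀ w, (u', w) ∉ bid M u j := by
  rintro w (⟨rfl, -⟩ | ⟨hw, -⟩)
  exacts [hne rfl, hu' w hw]

lemma le_of_raise {h h' : V → ℕ} {j : V} (hj' : h' j = h j + 1)
    (hne : ∀ w, w ≠ j → h' w = h w) (w : V) : h w ≤ h' w := by
  by_cases hw : w = j
  · subst hw; omega
  · exact (hne w hw).ge

structure AuctionInvariant (E M : Set (U × V)) (h : V → ℕ) : Prop where
  subset : M ⊆ E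
  isMatching : IsMatching M
  le_add_one_of_mem : ∀ a b, (a, b) ∈ M → ∀ w, (a, w) ∈ E → h b ≤ h w + 1
  eq_zero_of_free : ∀ v, (∀ a, (a, v) ∉ M) → h v = 0

namespace AuctionInvariant

variable {h h' : V → ℕ}

lemma bid {u : U} {j : V} (hinv : AuctionInvariant E M h) (hu : ∀ w, (u, w) ∉ M)
    (hj : (u, j) ∈ E) (hmin : ∀ w, (u, w) ∈ E → h j ≤ h w)
    (hj' : h' j = h j + 1) (hne : ∀ w, w ≠ j → h' w = h w) :
    AuctionInvariant E (bid M u j) h' := by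
  have hmono := le_of_raise hj' hne
  refine ⟨bid_subset hinv.subset hj, hinv.isMatching.bid hu, ?_, ?_⟩
  · rintro a b (⟨rfl, rfl⟩ | ⟨hab, hbj⟩) w hw
    · have := hmin w hw; have := hmono w; omega
    · have := hinv.le_add_one_of_mem a b hab w hw; have := hmono w
      rw [hne b hbj]; omega
  · intro v hv
    have hvj : v ≠ j := by rintro rfl; exact hv u (mem_bid.2 (Or.inl rfl))
    rw [hne v hvj]
    exact hinv.eq_zero_of_free v fun a ha => hv a (mem_bid.2 (Or.inr ⟨ha, hvj⟩))

lemma value_start_le_of_isAugPath {us : ℕ → U} {vs : ℕ → V} {m : ℕ} (hinv : AuctionInvariant E M h)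
    (hp : IsAugPath E M us vs m) : h (vs 0) ≤ m := by
  obtain ⟨-, hend, hedge, hmatch, -, -⟩ := hp
  suffices key : ∀ d k, k + d = m → h (vs k) ≤ d from key m 0 (zero_add m)
  intro d
  induction d with
  | zero =>
    rintro k rfl
    exact (hinv.eq_zero_of_free _ hend).le
  | succ d ih =>
    intro k hk
    have := hinv.le_add_one_of_mem _ _ (hmatch k (by omega)) _ (hedge (k + 1) (by omega)).1
    have := ih (k + 1) (by omega)
    omega

end AuctionInvariant

lemma exists_min_neighbor {h : V → ℕ} {a : U} {w : V} (hw : (a, w) ∈ E) :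
    ∃ j, (a, j) ∈ E ∧ ∀ w, (a, w) ∈ E → h j ≤ h w := by
  classical
  have hex : ∃ n, ∃ j, (a, j) ∈ E ∧ h j = n := ⟨_, w, hw, rfl⟩
  obtain ⟨j, hj, hjn⟩ := Nat.find_spec hex
  exact ⟨j, hj, fun w hw => hjn ▸ Nat.find_min' hex ⟨w, hw, rfl⟩⟩

lemma sum_tsub_lt_of_raise [Fintype V] {h h' : V → ℕ} {j : V} {l : ℕ} (hjl : h j ≤ l)
    (hj' : h' j = h j + 1) (hne : ∀ w, w ≠ j → h' w = h w) :
    ∑ v, (l + 1 - h' v) < ∑ v, (l + 1 - h v) := by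
  refine Finset.sum_lt_sum (fun v _ => ?_) ⟨j, Finset.mem_univ j, by omega⟩
  exact Nat.sub_le_sub_left (le_of_raise hj' hne v) _

theorem AuctionInvariant.exists_low_neighbor [Fintype V] {l : ℕ}
    (haug : ∀ M ⊆ E, IsMatching M → (∃ u : U, ∀ v : V, (u, v) ∉ M) →
      ∃ (u : ℕ → U) (v : ℕ → V) (m : ℕ), IsAugPath E M u v m ∧ m ≤ l)
    {h : V → ℕ} (hinv : AuctionInvariant E M h) {u : U} (hu : ∀ v, (u, v) ∉ M) :
    ∃ j, (u, j) ∈ E ∧ h j ≤ l := by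
  classical
  induction hn : ∑ v, (l + 1 - h v) using Nat.strong_induction_on generalizing M h with
  | _ n ih =>
  obtain ⟨us, vs, m, hp, hml⟩ := haug M hinv.subset hinv.isMatching ⟨u, hu⟩
  have hv0 : h (vs 0) ≤ l := (hinv.value_start_le_of_isAugPath hp).trans hml
  obtain ⟨hstart_free, -, hedge, -⟩ := hp
  have hv0E : (us 0, vs 0) ∈ E := (hedge 0 m.zero_le).1
  by_cases hstart : us 0 = u
  · exact ⟨vs 0, hstart ▸ hv0E, hv0⟩
  obtain ⟨j, hj, hmin⟩ := exists_min_neighbor (h := h) hv0E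
  have hjl : h j ≤ l := (hmin _ hv0E).trans hv0
  set h' := Function.update h j (h j + 1)
  have hj' : h' j = h j + 1 := Function.update_self ..
  have hne : ∀ w, w ≠ j → h' w = h w := fun w hw => Function.update_of_ne hw ..
  obtain ⟨j', hj'E, hj'l⟩ := ih _ (hn ▸ sum_tsub_lt_of_raise hjl hj' hne)
    (hinv.bid hstart_free hj hmin hj' hne) (notMem_bid_of_ne hu (Ne.symm hstart)) rfl
  exact ⟨j', hj'E, (le_of_raise hj' hne j').trans hj'l⟩

lemma AuctionTrace.invariant (t : AuctionTrace U V E) (i : ℕ) :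
    AuctionInvariant E (t.M i) (t.h i) := by
  induction i with
  | zero =>
    refine ⟨by simp [t.M_init], by simp [IsMatching, t.M_init], by simp [t.M_init], ?_⟩
    exact fun v _ => t.h_init v
  | succ i ih =>
    rcases t.step i with ⟨-, hM, hh⟩ | ⟨u, j, hu, hj, hmin, hM, hj', hne⟩
    · rwa [hM, hh]
    · rw [hM]
      exact ih.bid hu hj hmin hj' hne

end

theorem free_vertex_has_low_neighbor_general {U V : Type*} [Fintype V]
    (E : Set (U × V)) (l : ℕ)
    (haug : ∀ M ⊆ E, IsMatching M → (∃ u : U, ∀ v : V, (u, v) ∉ M) →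
      ∃ (u : ℕ → U) (v : ℕ → V) (m : ℕ), IsAugPath E M u v m ∧ m ≤ l)
    (t : AuctionTrace U V E) :
    ∀ (i : ℕ) (u : U), (∀ v : V, (u, v) ∉ t.M i) →
      ∃ j : V, (u, j) ∈ E ∧ t.h i j ≤ l :=
  fun i _ hu => (t.invariant i).exists_low_neighbor haug hu

/-- Suppose `G = (U, V, E)` is bipartite with `|U| = |V| = N`,
`G` contains a perfect matching, and every non-perfect matching `M ⊆ E` admits
an augmenting path of length at most `2 l + 1` (parameter `m ≤ l` in our
encoding).  Then at every iteration `i` of the simplified auction algorithm,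
every free vertex `u ∈ U` has at least one neighbor `j` with `h i j ≤ l`. -/
theorem free_vertex_has_low_neighbor {U V : Type*} [Fintype U] [Fintype V]
    (N : ℕ) (hU : Fintype.card U = N) (hV : Fintype.card V = N)
    (E : Set (U × V)) (l : ℕ)
    (hperfect : ∃ P ⊆ E, IsMatching P ∧ ∀ u : U, ∃ v : V, (u, v) ∈ P)
    (haug : ∀ M ⊆ E, IsMatching M → (∃ u : U, ∀ v : V, (u, v) ∉ M) →
      ∃ (u : ℕ → U) (v : ℕ → V) (m : ℕ), IsAugPath E M u v m ∧ m ≤ l)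
    (t : AuctionTrace U V E) :
    ∀ (i : ℕ) (u : U), (∀ v : V, (u, v) ∉ t.M i) →
      ∃ j : V, (u, j) ∈ E ∧ t.h i j ≤ l :=
  free_vertex_has_low_neighbor_general E l haug t
end

section
/- Let G ∈ B(N,p) with p = c·log(N)/N, c > 2, and N sufficiently large. Then the expected number of iterations T of the simplified auction algorithm satisfies E(T) = O(N·log(N)/log(Np)). -/
/-!
Split `E T` over the bad event `A ∪ B` and its complement. On the bad event `T ≤ N²`, and
`ℙ(A ∪ B) ≤ 2 N^(1-c) + N^(-γ)` with `c > 2`, `γ ≥ 1`, so it contributes at most `3 N`.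
Off it, `T ≤ c̃ X + N` with `X = N log N / log (N p)`. Since `N p = c log N ≤ N` for large `N`,
`log (N p) ≤ log N`, so `N ≤ X` and `E T ≤ (c̃ + 4) X`.
-/

open MeasureTheory Filter Real

theorem integral_le_mul_measureReal_add_of_le_of_le_compl {Ω : Type*} [MeasurableSpace Ω]
    {μ : Measure Ω} [IsProbabilityMeasure μ] {f : Ω → ℝ} (hf : Integrable f μ) {S : Set Ω}
    {K M : ℝ} (hM : 0 ≤ M) (hK : ∀ ω, f ω ≤ K) (hS : ∀ ω ∉ S, f ω ≤ M) :
    ∫ ω, f ω ∂μ ≤ K * μ.real S + M := by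
  set S' := toMeasurable μ S
  have hS' : MeasurableSet S' := measurableSet_toMeasurable μ S
  have hf_le : ∀ ω, f ω ≤ S'.indicator (fun _ ↦ K) ω + M := by
    intro ω
    by_cases hω : ω ∈ S'
    · simpa [Set.indicator_of_mem hω] using (hK ω).trans (le_add_of_nonneg_right hM)
    · simpa [Set.indicator_of_notMem hω] using hS ω fun h ↦ hω (subset_toMeasurable μ S h)
  have hind : Integrable (S'.indicator fun _ ↦ K) μ := (integrable_const K).indicator hS'
  calc ∫ ω, f ω ∂μ ≤ ∫ ω, (S'.indicator (fun _ ↦ K) ω + M) ∂μ :=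
        integral_mono hf (hind.add (integrable_const M)) hf_le
    _ = K * μ.real S + M := by
        rw [integral_add hind (integrable_const M), integral_indicator_const _ hS']
        simp [S', measureReal_def, measure_toMeasurable, mul_comm]

theorem mul_self_mul_rpow_neg_le {x a : ℝ} (hx : 1 ≤ x) (ha : 1 ≤ a) : x * x * x ^ (-a) ≤ x := by
  have hx0 : 0 < x := by linarith
  calc x * x * x ^ (-a) = x ^ (2 - a) := by
        rw [sub_eq_add_neg, rpow_add hx0, rpow_two, sq]
    _ ≤ x ^ (1 : ℝ) := rpow_le_rpow_of_exponent_le hx (by linarith)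
    _ = x := rpow_one x

theorem eventually_mul_log_le_self (c : ℝ) : ∀ᶠ x : ℝ in atTop, c * log x ≤ x := by
  filter_upwards [(isLittleO_log_id_atTop.const_mul_left c).bound one_pos,
    eventually_ge_atTop 0] with x hx hx0
  simpa [abs_of_nonneg hx0] using (le_abs_self _).trans hx

theorem eventually_self_le_mul_log_div_log_mul_log {c : ℝ} (hc : 0 < c) :
    ∀ᶠ x : ℝ in atTop, x ≤ x * log x / log (c * log x) := by
  filter_upwards [eventually_mul_log_le_self c,
    (tendsto_log_atTop.const_mul_atTop hc).eventually_gt_atTop 1,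
    eventually_gt_atTop 0] with x hcx hcx1 hx0
  have hL : 0 < log (c * log x) := log_pos hcx1
  have hLx : log (c * log x) ≤ log x := log_le_log (by linarith) hcx
  rw [le_div_iff₀ hL]
  exact mul_le_mul_of_nonneg_left hLx hx0.le

theorem mul_self_mul_measureReal_union_le {Ω : Type*} [MeasurableSpace Ω] {μ : Measure Ω}
    {A B : Set Ω} {x c γ : ℝ} (hx : 1 ≤ x) (hc : 2 ≤ c) (hγ : 1 ≤ γ)
    (hA : μ.real A ≤ 2 / x ^ (c - 1)) (hB : μ.real B ≤ x ^ (-γ)) :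
    x * x * μ.real (A ∪ B) ≤ 3 * x :=
  calc x * x * μ.real (A ∪ B) ≤ x * x * (2 * x ^ (-(c - 1)) + x ^ (-γ)) := by
        gcongr
        rw [rpow_neg (by positivity), ← div_eq_mul_inv]
        exact (measureReal_union_le _ _).trans (add_le_add hA hB)
    _ = 2 * (x * x * x ^ (-(c - 1))) + x * x * x ^ (-γ) := by ring
    _ ≤ 2 * x + x := by
        gcongr
        · exact mul_self_mul_rpow_neg_le hx (by linarith)
        · exact mul_self_mul_rpow_neg_le hx hγ
    _ = 3 * x := by ring

theorem expected_iterations_bigO_general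
    (c ctil γ : ℝ) (hc : 2 < c) (hctil : 0 < ctil) (hγ : 1 ≤ γ)
    (p : ℕ → ℝ) (hp : ∀ N : ℕ, p N = c * Real.log N / N)
    (Ω : ℕ → Type) (mΩ : ∀ N, MeasurableSpace (Ω N))
    (ℙ : ∀ N, Measure (Ω N)) (hprob : ∀ N, IsProbabilityMeasure (ℙ N))
    (T : ∀ N, Ω N → ℕ) (hTmeas : ∀ N, Measurable (T N))
    (A B : ∀ N, Set (Ω N))
    (hA : ∀ᶠ N : ℕ in atTop, ((ℙ N) (A N)).toReal ≤ 2 / (N : ℝ) ^ (c - 1))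
    (hB : ∀ᶠ N : ℕ in atTop, ((ℙ N) (B N)).toReal ≤ (N : ℝ) ^ (-γ))
    (hT1 : ∀ (N : ℕ) (ω : Ω N), (T N ω : ℝ) ≤ N * (N - 1))
    (hT2 : ∀ (N : ℕ), ∀ ω ∉ A N ∪ B N,
      (T N ω : ℝ) ≤ ctil * N * Real.log N / Real.log (N * p N) + N) :
    ∃ C : ℝ, 0 < C ∧ ∀ᶠ N : ℕ in atTop,
      (∫ ω, (T N ω : ℝ) ∂(ℙ N)) ≤
        C * (N * Real.log N / Real.log (N * p N)) := by
  refine ⟨ctil + 4, by positivity, ?_⟩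
  filter_upwards [hA, hB, tendsto_natCast_atTop_atTop.eventually
    (eventually_self_le_mul_log_div_log_mul_log (by linarith : 0 < c)),
    eventually_ge_atTop 1] with N hAN hBN hX hN
  have hN1 : (1 : ℝ) ≤ N := by exact_mod_cast hN
  have hNp : (N : ℝ) * p N = c * log N := by rw [hp]; field_simp
  have hT : ∀ ω, (T N ω : ℝ) ≤ N * N := fun ω ↦ (hT1 N ω).trans (by nlinarith)
  have hbad := mul_self_mul_measureReal_union_le (μ := ℙ N) hN1 hc.le hγ hAN hBN
  have hTint : Integrable (fun ω ↦ (T N ω : ℝ)) (ℙ N) :=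
    .of_bound (measurable_from_top.comp (hTmeas N)).aestronglyMeasurable _
      (ae_of_all _ fun ω ↦ by simpa using hT ω)
  have hgood := hT2 N
  rw [hNp] at hgood ⊢
  set X := (N : ℝ) * log N / log (c * log N)
  have hctilX : ctil * N * log N / log (c * log N) = ctil * X := by ring
  rw [hctilX] at hgood
  calc ∫ ω, (T N ω : ℝ) ∂(ℙ N)
      ≤ N * N * (ℙ N).real (A N ∪ B N) + (ctil * X + N) :=
        integral_le_mul_measureReal_add_of_le_of_le_compl hTint
          (add_nonneg (mul_nonneg hctil.le (by linarith)) N.cast_nonneg) hT hgood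
    _ ≤ (ctil + 4) * X := by nlinarith

/-- Let `G ∈ B(N, p)` with `p = c log N / N`, `c > 2`, and `N`
sufficiently large.  Then the expected number of iterations `T` of the
simplified auction algorithm satisfies `E(T) = O(N log N / log (N p))`.
We formalize the conditioning argument: for each `N`, `T N` is the (random)
iteration count on a probability space `Ω N`, `A N` is the event that the
random graph has no perfect matching (with `ℙ(A N) ≤ 2 / N^(c-1)` for large
`N`, by Erdős–Rényi), `B N` the event `G ∉ B̃(N, p)` (with `ℙ(B N) ≤ N^(-γ)`
for large `N`, by Motwani); `T ≤ N (N - 1)` always and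
`T ≤ c̃ N log N / log (N p) + N` off `A ∪ B`. -/
theorem expected_iterations_bigO
    (c ctil γ : ℝ) (hc : 2 < c) (hctil : 0 < ctil) (hγ : 1 ≤ γ)
    (p : ℕ → ℝ) (hp : ∀ N : ℕ, p N = c * Real.log N / N)
    (Ω : ℕ → Type) (mΩ : ∀ N, MeasurableSpace (Ω N))
    (ℙ : ∀ N, Measure (Ω N)) (hprob : ∀ N, IsProbabilityMeasure (ℙ N))
    (T : ∀ N, Ω N → ℕ) (hTmeas : ∀ N, Measurable (T N))
    (A B : ∀ N, Set (Ω N))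
    (hAmeas : ∀ N, MeasurableSet (A N)) (hBmeas : ∀ N, MeasurableSet (B N))
    (hA : ∀ᶠ N : ℕ in atTop, ((ℙ N) (A N)).toReal ≤ 2 / (N : ℝ) ^ (c - 1))
    (hB : ∀ᶠ N : ℕ in atTop, ((ℙ N) (B N)).toReal ≤ (N : ℝ) ^ (-γ))
    (hT1 : ∀ (N : ℕ) (ω : Ω N), (T N ω : ℝ) ≤ N * (N - 1))
    (hT2 : ∀ (N : ℕ), ∀ ω ∉ A N ∪ B N,
      (T N ω : ℝ) ≤ ctil * N * Real.log N / Real.log (N * p N) + N) :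
    ∃ C : ℝ, 0 < C ∧ ∀ᶠ N : ℕ in atTop,
      (∫ ω, (T N ω : ℝ) ∂(ℙ N)) ≤
        C * (N * Real.log N / Real.log (N * p N)) :=
  expected_iterations_bigO_general c ctil γ hc hctil hγ p hp Ω mΩ ℙ hprob T hTmeas A B hA hB hT1 hT2
end

section
/- Let G=(U,V,E) be bipartite with |U|=|V|=N containing a perfect matching, and suppose every non-perfect matching admits an augmenting path of length at most 2l+1. If at some iteration i a free vertex u satisfies n_u ⊆ D_{l+1}(i), then u can never be the starting vertex of an augmenting path at any later iteration j ≥ i, contradicting the existence of a perfect matching; hence no free vertex u ever has n_u ⊆ D_{l+1}(i). -/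
/-!
The auction invariant (`1`-complementary slackness, with unassigned objects still at price `0`)
makes prices drop by at most one per step along an augmenting path, so from a free `u` whose
neighbours all cost at least `l + 1` every augmenting path has length at least `2l + 3`.
Augmenting along a shortest augmenting path keeps `u` free, frees no other vertex, and never
shortens the augmenting paths from `u` (a Hopcroft–Karp counting argument). Repeating this,
`u` ends up as the only free vertex, and then the path of length at most `2l + 1` provided by
the hypothesis would have to start at `u`.
-/

open Finset
open scoped symmDiff

section

variable {U V : Type*}

section Augment

variable [DecidableEq U] [DecidableEq V] {E M : Set (U × V)} {a : ℕ → U} {b : ℕ → V} {m : ℕ}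

def pathEdges (a : ℕ → U) (b : ℕ → V) (m : ℕ) : Finset (U × V) :=
  (range (m + 1)).image (fun k => (a k, b k)) ∪ (range m).image (fun k => (a (k + 1), b k))

lemma mem_pathEdges {e : U × V} :
    e ∈ pathEdges a b m ↔ (∃ k ≤ m, e = (a k, b k)) ∨ ∃ k < m, e = (a (k + 1), b k) := by
  simp only [pathEdges, mem_union, mem_image, mem_range, Nat.lt_succ_iff, eq_comm]

lemma exists_snd_eq_of_mem_pathEdges {e : U × V} (he : e ∈ pathEdges a b m) :
    ∃ k ≤ m, e.2 = b k := by
  rcases mem_pathEdges.mp he with ⟨k, hk, rfl⟩ | ⟨k, hk, rfl⟩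
  exacts [⟨k, hk, rfl⟩, ⟨k, hk.le, rfl⟩]

lemma card_pathEdges_le : #(pathEdges a b m) ≤ 2 * m + 1 :=
  calc #(pathEdges a b m)
      ≤ #((range (m + 1)).image (fun k => (a k, b k))) +
          #((range m).image (fun k => (a (k + 1), b k))) := card_union_le _ _
    _ ≤ #(range (m + 1)) + #(range m) := add_le_add card_image_le card_image_le
    _ = 2 * m + 1 := by simp only [card_range]; ring

lemma IsAugPath.card_pathEdges (hP : IsAugPath E M a b m) : #(pathEdges a b m) = 2 * m + 1 := by
  obtain ⟨-, -, -, -, hinjU, hinjV⟩ := hP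
  have hdisj : Disjoint ((range (m + 1)).image (fun k => (a k, b k)))
      ((range m).image (fun k => (a (k + 1), b k))) := by
    simp only [disjoint_left, mem_image, mem_range, not_exists, not_and]
    rintro _ ⟨k, hk, rfl⟩ j hj hjk
    obtain ⟨hak, hbk⟩ := Prod.mk.inj hjk
    have hjk : j = k := hinjV j k (by omega) (by omega) hbk
    have := hinjU (j + 1) k (by omega) (by omega) hak
    omega
  rw [pathEdges, card_union_of_disjoint hdisj, card_image_of_injOn, card_image_of_injOn,
    card_range, card_range]
  · ring
  all_goals
    intro j hj k hk h
    simp only [coe_range, Set.mem_Iio] at hj hk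
    exact hinjV j k (by omega) (by omega) (Prod.mk.inj h).2

lemma IsAugPath.mem_pathEdges_of_mem_left (hM : IsMatching M) (hP : IsAugPath E M a b m)
    {x : U} {w : V} (hxw : (x, w) ∈ M) {k : ℕ} (hk : k ≤ m) (hx : x = a k) :
    (x, w) ∈ pathEdges a b m := by
  obtain ⟨hstart, -, -, hmatched, -, -⟩ := hP
  obtain _ | k := k
  · exact absurd (hx ▸ hxw) (hstart w)
  · rw [hM.1 _ _ _ hxw (hx ▸ hmatched k hk), hx]
    exact mem_pathEdges.mpr (Or.inr ⟨k, hk, rfl⟩)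

lemma IsAugPath.mem_pathEdges_of_mem_right (hM : IsMatching M) (hP : IsAugPath E M a b m)
    {x : U} {w : V} (hxw : (x, w) ∈ M) {k : ℕ} (hk : k ≤ m) (hw : w = b k) :
    (x, w) ∈ pathEdges a b m := by
  obtain ⟨-, hend, -, hmatched, -, -⟩ := hP
  obtain hk | rfl := hk.lt_or_eq
  · rw [hM.2 _ _ _ hxw (hw ▸ hmatched k hk), hw]
    exact mem_pathEdges.mpr (Or.inr ⟨k, hk, rfl⟩)
  · exact absurd (hw ▸ hxw) (hend x)

def augment (M : Set (U × V)) (a : ℕ → U) (b : ℕ → V) (m : ℕ) : Set (U × V) :=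
  M ∆ ↑(pathEdges a b m)

lemma IsAugPath.mem_augment (hP : IsAugPath E M a b m) {e : U × V} :
    e ∈ augment M a b m ↔ (e ∈ M ∧ e ∉ pathEdges a b m) ∨ ∃ k ≤ m, e = (a k, b k) := by
  obtain ⟨-, -, hfree, hmatched, -, -⟩ := hP
  rw [augment, Set.mem_symmDiff, Finset.mem_coe]
  refine or_congr Iff.rfl ⟨fun ⟨he, heM⟩ => ?_, ?_⟩
  · rcases mem_pathEdges.mp he with h | ⟨k, hk, rfl⟩
    exacts [h, absurd (hmatched k hk) heM]
  · rintro ⟨k, hk, rfl⟩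
    exact ⟨mem_pathEdges.mpr (Or.inl ⟨k, hk, rfl⟩), (hfree k hk).2⟩

lemma IsAugPath.augment_subset (hME : M ⊆ E) (hP : IsAugPath E M a b m) :
    augment M a b m ⊆ E := by
  intro e he
  rcases hP.mem_augment.mp he with ⟨heM, -⟩ | ⟨k, hk, rfl⟩
  exacts [hME heM, (hP.2.2.1 k hk).1]

lemma IsAugPath.isMatching_augment (hM : IsMatching M) (hP : IsAugPath E M a b m) :
    IsMatching (augment M a b m) := by
  constructor
  · intro x w w' hw hw'
    rcases hP.mem_augment.mp hw with ⟨hwM, hwP⟩ | ⟨k, hk, hxk⟩ <;>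
      rcases hP.mem_augment.mp hw' with ⟨hwM', hwP'⟩ | ⟨k', hk', hxk'⟩
    · exact hM.1 _ _ _ hwM hwM'
    · exact absurd (hP.mem_pathEdges_of_mem_left hM hwM hk' (Prod.mk.inj hxk').1) hwP
    · exact absurd (hP.mem_pathEdges_of_mem_left hM hwM' hk (Prod.mk.inj hxk).1) hwP'
    · obtain ⟨rfl, rfl⟩ := Prod.mk.inj hxk
      obtain ⟨hkk, rfl⟩ := Prod.mk.inj hxk'
      rw [hP.2.2.2.2.1 k k' hk hk' hkk]
  · intro x x' w hw hw'
    rcases hP.mem_augment.mp hw with ⟨hwM, hwP⟩ | ⟨k, hk, hxk⟩ <;>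
      rcases hP.mem_augment.mp hw' with ⟨hwM', hwP'⟩ | ⟨k', hk', hxk'⟩
    · exact hM.2 _ _ _ hwM hwM'
    · exact absurd (hP.mem_pathEdges_of_mem_right hM hwM hk' (Prod.mk.inj hxk').2) hwP
    · exact absurd (hP.mem_pathEdges_of_mem_right hM hwM' hk (Prod.mk.inj hxk).2) hwP'
    · obtain ⟨rfl, rfl⟩ := Prod.mk.inj hxk
      obtain ⟨rfl, hkk⟩ := Prod.mk.inj hxk'
      rw [hP.2.2.2.2.2 k k' hk hk' hkk]

lemma IsAugPath.start_mem_augment (hP : IsAugPath E M a b m) : (a 0, b 0) ∈ augment M a b m :=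
  hP.mem_augment.mpr (Or.inr ⟨0, m.zero_le, rfl⟩)

lemma IsAugPath.exists_mem_augment (hP : IsAugPath E M a b m) {x : U} {w : V}
    (hxw : (x, w) ∈ M) : ∃ w', (x, w') ∈ augment M a b m := by
  by_cases hwP : (x, w) ∈ pathEdges a b m
  · rcases mem_pathEdges.mp hwP with ⟨k, hk, hxk⟩ | ⟨k, hk, hxk⟩
    · exact absurd (hxk ▸ hxw) (hP.2.2.1 k hk).2
    · exact ⟨b (k + 1), hP.mem_augment.mpr (Or.inr ⟨k + 1, hk, by rw [(Prod.mk.inj hxk).1]⟩)⟩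
  · exact ⟨w, hP.mem_augment.mpr (Or.inl ⟨hxw, hwP⟩)⟩

lemma IsAugPath.free_augment (hP : IsAugPath E M a b m) {x : U} (hx : ∀ w, (x, w) ∉ M)
    (hxa : x ≠ a 0) : ∀ w, (x, w) ∉ augment M a b m := by
  intro w hw
  rcases hP.mem_augment.mp hw with ⟨hwM, -⟩ | ⟨k, hk, hxk⟩
  · exact hx w hwM
  · obtain ⟨rfl, -⟩ := Prod.mk.inj hxk
    obtain _ | k := k
    · exact hxa rfl
    · exact hx _ (hP.2.2.2.1 k hk)

lemma IsAugPath.ncard_free_augment_lt [Finite U] (hP : IsAugPath E M a b m) :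
    {x | ∀ w, (x, w) ∉ augment M a b m}.ncard < {x | ∀ w, (x, w) ∉ M}.ncard := by
  refine Set.ncard_lt_ncard ⟨fun x hx w hw => ?_, fun h => ?_⟩
  · obtain ⟨w', hw'⟩ := hP.exists_mem_augment hw
    exact hx w' hw'
  · exact h hP.1 _ hP.start_mem_augment

end Augment

section AltWalk

variable {E M M' : Set (U × V)} {x x₁ x₂ : ℕ → U} {v v₁ v₂ : ℕ → V} {K K₁ K₂ : ℕ}

def IsAltWalk (M M' : Set (U × V)) (x : ℕ → U) (v : ℕ → V) (K : ℕ) : Prop :=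
  (∀ w, (x 0, w) ∉ M) ∧ (∀ k ≤ K, (x k, v k) ∈ M') ∧ ∀ k < K, (x (k + 1), v k) ∈ M

-- Alternating walks can be traced back uniquely from any of their `V`-vertices.
lemma IsAltWalk.eq_of_right_eq (hM : IsMatching M) (hM' : IsMatching M')
    (h₁ : IsAltWalk M M' x₁ v₁ K₁) (h₂ : IsAltWalk M M' x₂ v₂ K₂) :
    ∀ j j', j ≤ K₁ → j' ≤ K₂ → v₁ j = v₂ j' → j = j' ∧ x₁ 0 = x₂ 0 := by
  intro j
  induction j with
  | zero =>
    intro j' _ hj' hv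
    have hx := hM'.2 _ _ _ (h₁.2.1 0 K₁.zero_le) (hv ▸ h₂.2.1 j' hj')
    obtain _ | j' := j'
    · exact ⟨rfl, hx⟩
    · exact absurd (hx ▸ h₂.2.2 j' hj') (h₁.1 _)
  | succ j ih =>
    intro j' hj hj' hv
    have hx := hM'.2 _ _ _ (h₁.2.1 (j + 1) hj) (hv ▸ h₂.2.1 j' hj')
    obtain _ | j' := j'
    · exact absurd (hx ▸ h₁.2.2 j hj) (h₂.1 _)
    · have hv' := hM.1 _ _ _ (hx ▸ h₁.2.2 j hj) (h₂.2.2 j' hj')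
      obtain ⟨rfl, h0⟩ := ih j' (by omega) (by omega) hv'
      exact ⟨rfl, h0⟩

lemma IsAltWalk.isAugPath (hM : IsMatching M) (hM' : IsMatching M') (hM'E : M' ⊆ E)
    (h : IsAltWalk M M' x v K) (hend : ∀ y, (y, v K) ∉ M) : IsAugPath E M x v K := by
  have hinjV : ∀ j k, j ≤ K → k ≤ K → v j = v k → j = k :=
    fun j k hj hk hv => (h.eq_of_right_eq hM hM' h j k hj hk hv).1
  refine ⟨h.1, hend, fun k hk => ⟨hM'E (h.2.1 k hk), fun hkM => ?_⟩, h.2.2, ?_, hinjV⟩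
  · obtain _ | k := k
    · exact h.1 _ hkM
    · have := hinjV _ _ (by omega) hk (hM.1 _ _ _ (h.2.2 k hk) hkM)
      omega
  · exact fun j k hj hk hx =>
      hinjV j k hj hk (hM'.1 _ _ _ (h.2.1 j hj) (hx ▸ h.2.1 k hk))

lemma IsAltWalk.extend (h : IsAltWalk M M' x v K) {y : U} {w : V} (hyM : (y, v K) ∈ M)
    (hyM' : (y, w) ∈ M') :
    IsAltWalk M M' (fun k => if k ≤ K then x k else y) (fun k => if k ≤ K then v k else w)
      (K + 1) := by
  refine ⟨by simpa using h.1, fun k hk => ?_, fun k hk => ?_⟩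
  · by_cases hkK : k ≤ K
    · simpa [hkK] using h.2.1 k hkK
    · simpa [hkK] using hyM'
  · by_cases hkK : k + 1 ≤ K
    · simpa [hkK, show k ≤ K by omega] using h.2.2 k hkK
    · obtain rfl : k = K := by omega
      simpa using hyM

-- The walk cannot be extended forever: its `V`-vertices are distinct and `V` is finite.
lemma exists_isAltWalk_isAugPath [Finite V] (hM : IsMatching M) (hM' : IsMatching M')
    (hM'E : M' ⊆ E) (hcov : ∀ y w, (y, w) ∈ M → ∃ w', (y, w') ∈ M') {z : U}
    (hz : ∀ w, (z, w) ∉ M) (hz' : ∃ w, (z, w) ∈ M') :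
    ∃ x v K, x 0 = z ∧ IsAltWalk M M' x v K ∧ IsAugPath E M x v K := by
  by_contra! hstuck
  have hwalk : ∀ K, ∃ x v, x 0 = z ∧ IsAltWalk M M' x v K := by
    intro K
    induction K with
    | zero =>
      obtain ⟨w, hw⟩ := hz'
      exact ⟨fun _ => z, fun _ => w, rfl, hz, fun k _ => hw, fun k hk => absurd hk k.not_lt_zero⟩
    | succ K ih =>
      obtain ⟨x, v, hx0, h⟩ := ih
      have : ∃ y, (y, v K) ∈ M := by
        by_contra! hend
        exact hstuck x v K hx0 h (h.isAugPath hM hM' hM'E hend)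
      obtain ⟨y, hy⟩ := this
      obtain ⟨w, hw⟩ := hcov y _ hy
      exact ⟨_, _, by simpa using hx0, h.extend hy hw⟩
  obtain ⟨x, v, -, h⟩ := hwalk (Nat.card V)
  have hinj : Function.Injective (fun k : Fin (Nat.card V + 1) => v k) := fun j k hjk =>
    Fin.ext (h.eq_of_right_eq hM hM' h j k (by omega) (by omega) hjk).1
  have := Nat.card_le_card_of_injective _ hinj
  simp at this

lemma IsAugPath.pathEdges_subset_symmDiff [DecidableEq U] [DecidableEq V] (hM' : IsMatching M')
    (hP : IsAugPath E M x v K) (hM'P : ∀ k ≤ K, (x k, v k) ∈ M') :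
    ↑(pathEdges x v K) ⊆ M ∆ M' := by
  intro e he
  rw [Set.mem_symmDiff]
  rcases mem_pathEdges.mp he with ⟨k, hk, rfl⟩ | ⟨k, hk, rfl⟩
  · exact Or.inr ⟨hM'P k hk, (hP.2.2.1 k hk).2⟩
  · refine Or.inl ⟨hP.2.2.2.1 k hk, fun hkM' => ?_⟩
    have := hP.2.2.2.2.2 _ _ (by omega) hk (hM'.1 _ _ _ hkM' (hM'P (k + 1) hk))
    omega

lemma IsAltWalk.disjoint_pathEdges [DecidableEq U] [DecidableEq V] (hM : IsMatching M)
    (hM' : IsMatching M') (h₁ : IsAltWalk M M' x₁ v₁ K₁) (h₂ : IsAltWalk M M' x₂ v₂ K₂)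
    (hne : x₁ 0 ≠ x₂ 0) : Disjoint (pathEdges x₁ v₁ K₁) (pathEdges x₂ v₂ K₂) := by
  refine disjoint_left.mpr fun e he₁ he₂ => hne ?_
  obtain ⟨j, hj, hej⟩ := exists_snd_eq_of_mem_pathEdges he₁
  obtain ⟨j', hj', hej'⟩ := exists_snd_eq_of_mem_pathEdges he₂
  exact (h₁.eq_of_right_eq hM hM' h₂ j j' hj hj' (hej ▸ hej')).2

end AltWalk

def NoShortAugPathFrom (E M : Set (U × V)) (u : U) (L : ℕ) : Prop :=
  ∀ a b m, IsAugPath E M a b m → a 0 = u → L ≤ m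

lemma exists_shortest_isAugPath {E M : Set (U × V)} (h : ∃ a b m, IsAugPath E M a b m) :
    ∃ a b m, IsAugPath E M a b m ∧ ∀ a' b' m', IsAugPath E M a' b' m' → m ≤ m' := by
  classical
  have hex : ∃ m, ∃ a b, IsAugPath E M a b m := by
    obtain ⟨a, b, m, hP⟩ := h
    exact ⟨m, a, b, hP⟩
  obtain ⟨a, b, hP⟩ := Nat.find_spec hex
  exact ⟨a, b, _, hP, fun a' b' m' hP' => Nat.find_min' hex ⟨a', b', hP'⟩⟩

-- Two augmentations `M₃ = (M ∆ P) ∆ R` change `M` only on `P ∪ R`, while `M ∆ M₃` contains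
-- disjoint augmenting paths from `u` and from the start of `P`, of lengths at least `2L + 1`
-- and `|P|`.
lemma NoShortAugPathFrom.augment_shortest [DecidableEq U] [DecidableEq V] [Finite V]
    {E M : Set (U × V)} {a : ℕ → U} {b : ℕ → V} {m L : ℕ} {u : U}
    (hME : M ⊆ E) (hM : IsMatching M) (hP : IsAugPath E M a b m)
    (hmin : ∀ a' b' m', IsAugPath E M a' b' m' → m ≤ m') (hu : ∀ w, (u, w) ∉ M)
    (hne : a 0 ≠ u) (hfar : NoShortAugPathFrom E M u L) :
    NoShortAugPathFrom E (augment M a b m) u L := by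
  intro c d r hR hc
  set M₃ := augment (augment M a b m) c d r with hM₃def
  have hM' := hP.isMatching_augment hM
  have hM₃ : IsMatching M₃ := hR.isMatching_augment hM'
  have hM₃E : M₃ ⊆ E := hR.augment_subset (hP.augment_subset hME)
  have hcov : ∀ y w, (y, w) ∈ M → ∃ w', (y, w') ∈ M₃ := fun y w hyw =>
    let ⟨_, hyw'⟩ := hP.exists_mem_augment hyw
    hR.exists_mem_augment hyw'
  have hdiff : M ∆ M₃ = ↑(pathEdges a b m ∆ pathEdges c d r) := by
    rw [coe_symmDiff, hM₃def, augment, augment, symmDiff_assoc, symmDiff_symmDiff_cancel_left]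
  have hsub : ∀ {x v K}, IsAugPath E M x v K → (∀ k ≤ K, (x k, v k) ∈ M₃) →
      pathEdges x v K ⊆ pathEdges a b m ∪ pathEdges c d r := fun hQ hQM₃ =>
    (coe_subset.mp (hdiff ▸ hQ.pathEdges_subset_symmDiff hM₃ hQM₃)).trans symmDiff_le_sup
  obtain ⟨x₁, v₁, K₁, hx₁, hW₁, hQ₁⟩ := exists_isAltWalk_isAugPath hM hM₃ hM₃E hcov hu
    ⟨d 0, hc ▸ hR.start_mem_augment⟩
  obtain ⟨x₂, v₂, K₂, hx₂, hW₂, hQ₂⟩ := exists_isAltWalk_isAugPath hM hM₃ hM₃E hcov hP.1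
    (hR.exists_mem_augment hP.start_mem_augment)
  have hdisj := hW₁.disjoint_pathEdges hM hM₃ hW₂ (hx₁ ▸ hx₂ ▸ hne.symm)
  have hK₁ : L ≤ K₁ := hfar _ _ _ hQ₁ hx₁
  have hK₂ : m ≤ K₂ := hmin _ _ _ hQ₂
  have hcount : 2 * K₁ + 1 + (2 * K₂ + 1) ≤ 2 * m + 1 + (2 * r + 1) :=
    calc 2 * K₁ + 1 + (2 * K₂ + 1)
        = #(pathEdges x₁ v₁ K₁ ∪ pathEdges x₂ v₂ K₂) := by
          rw [card_union_of_disjoint hdisj, hQ₁.card_pathEdges, hQ₂.card_pathEdges]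
      _ ≤ #(pathEdges a b m ∪ pathEdges c d r) :=
          card_le_card (union_subset (hsub hQ₁ hW₁.2.1) (hsub hQ₂ hW₂.2.1))
      _ ≤ 2 * m + 1 + (2 * r + 1) :=
          (card_union_le _ _).trans (add_le_add card_pathEdges_le card_pathEdges_le)
  omega

theorem not_noShortAugPathFrom [Finite U] [Finite V] {E : Set (U × V)} {l : ℕ}
    (haug : ∀ M ⊆ E, IsMatching M → (∃ u : U, ∀ v : V, (u, v) ∉ M) →
      ∃ (u : ℕ → U) (v : ℕ → V) (m : ℕ), IsAugPath E M u v m ∧ m ≤ l)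
    {M : Set (U × V)} (hME : M ⊆ E) (hM : IsMatching M) {u : U} (hu : ∀ w, (u, w) ∉ M) :
    ¬ NoShortAugPathFrom E M u (l + 1) := by
  classical
  induction hn : {x | ∀ w, (x, w) ∉ M}.ncard using Nat.strong_induction_on generalizing M with
  | _ n ih =>
    intro hfar
    obtain ⟨a₀, b₀, m₀, hP₀, hm₀⟩ := haug M hME hM ⟨u, hu⟩
    obtain ⟨a, b, m, hP, hmin⟩ := exists_shortest_isAugPath ⟨a₀, b₀, m₀, hP₀⟩
    have hne : a 0 ≠ u := fun ha => by
      have := hfar a b m hP ha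
      have := hmin _ _ _ hP₀
      omega
    exact ih _ (hn ▸ hP.ncard_free_augment_lt) (hP.augment_subset hME) (hP.isMatching_augment hM)
      (hP.free_augment hu hne.symm) rfl (hfar.augment_shortest hME hM hP hmin hu hne)

/-- Bertsekas' `ε`-complementary slackness for `ε = 1`, with `p` the prices of the objects `V`,
together with the fact that unassigned objects have never received a bid. -/
structure EpsComplementary (E M : Set (U × V)) (p : V → ℕ) : Prop where
  isMatching : IsMatching M
  eq_zero_of_free : ∀ v, (∀ x, (x, v) ∉ M) → p v = 0
  le_add_one : ∀ x v w, (x, v) ∈ M → (x, w) ∈ E → p v ≤ p w + 1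

lemma IsMatching.insert_filter_snd_ne {M : Set (U × V)} (hM : IsMatching M) {u : U} {j : V}
    (hu : ∀ w, (u, w) ∉ M) : IsMatching (insert (u, j) {e ∈ M | e.2 ≠ j}) := by
  constructor
  · rintro x w w' (hw | ⟨hw, -⟩) (hw' | ⟨hw', -⟩)
    · rw [(Prod.mk.inj hw).2, (Prod.mk.inj hw').2]
    · exact absurd ((Prod.mk.inj hw).1 ▸ hw') (hu w')
    · exact absurd ((Prod.mk.inj hw').1 ▸ hw) (hu w)
    · exact hM.1 _ _ _ hw hw'
  · rintro x x' w (hw | ⟨hw, hwj⟩) (hw' | ⟨hw', hwj'⟩)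
    · rw [(Prod.mk.inj hw).1, (Prod.mk.inj hw').1]
    · exact absurd (Prod.mk.inj hw).2 hwj'
    · exact absurd (Prod.mk.inj hw').2 hwj
    · exact hM.2 _ _ _ hw hw'

lemma EpsComplementary.bid {E M : Set (U × V)} {p p' : V → ℕ} (hc : EpsComplementary E M p)
    {u : U} {j : V} (hu : ∀ w, (u, w) ∉ M) (hmin : ∀ w, (u, w) ∈ E → p j ≤ p w)
    (hpj : p' j = p j + 1) (hp' : ∀ w, w ≠ j → p' w = p w) :
    EpsComplementary E (insert (u, j) {e ∈ M | e.2 ≠ j}) p' where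
  isMatching := hc.isMatching.insert_filter_snd_ne hu
  eq_zero_of_free v hv := by
    have hvj : v ≠ j := by
      rintro rfl
      exact hv u (Set.mem_insert _ _)
    rw [hp' v hvj]
    exact hc.eq_zero_of_free v fun x hx => hv x (Set.mem_insert_of_mem _ ⟨hx, hvj⟩)
  le_add_one x v w hv hw := by
    have hp'_ge : p w ≤ p' w := by
      by_cases hwj : w = j
      · subst hwj; omega
      · rw [hp' w hwj]
    rcases hv with hv | ⟨hv, hvj⟩
    · obtain ⟨rfl, rfl⟩ := Prod.mk.inj hv
      have := hmin w hw
      omega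
    · have := hc.le_add_one x v w hv hw
      rw [hp' v hvj]
      omega

lemma AuctionTrace.epsComplementary {E : Set (U × V)} (t : AuctionTrace U V E) (i : ℕ) :
    EpsComplementary E (t.M i) (t.h i) := by
  induction i with
  | zero =>
    simp only [t.M_init]
    exact ⟨⟨by simp, by simp⟩, fun v _ => t.h_init v, by simp⟩
  | succ i ih =>
    rcases t.step i with ⟨-, hM, hh⟩ | ⟨u, j, hu, -, hmin, hM, hpj, hp'⟩
    · rwa [hM, hh]
    · rw [hM]
      exact ih.bid hu hmin hpj hp'

-- Prices drop by at most one per step along an augmenting path and vanish at its free end.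
lemma EpsComplementary.le_of_isAugPath {E M : Set (U × V)} {p : V → ℕ}
    (hc : EpsComplementary E M p) {a : ℕ → U} {b : ℕ → V} {m : ℕ} (hP : IsAugPath E M a b m) :
    p (b 0) ≤ m := by
  obtain ⟨-, hend, hedge, hmatched, -, -⟩ := hP
  have hdecay : ∀ n k, k + n = m → p (b k) ≤ n := by
    intro n
    induction n with
    | zero =>
      rintro k rfl
      exact (hc.eq_zero_of_free _ hend).le
    | succ n ih =>
      intro k hk
      have := hc.le_add_one _ _ _ (hmatched k (by omega)) (hedge (k + 1) (by omega)).1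
      have := ih (k + 1) (by omega)
      omega
  exact hdecay m 0 (zero_add m)

lemma EpsComplementary.noShortAugPathFrom {E M : Set (U × V)} {p : V → ℕ}
    (hc : EpsComplementary E M p) {u : U} {L : ℕ} (hL : ∀ w, (u, w) ∈ E → L ≤ p w) :
    NoShortAugPathFrom E M u L := by
  rintro a b m hP rfl
  exact (hL _ (hP.2.2.1 0 m.zero_le).1).trans (hc.le_of_isAugPath hP)

end

theorem no_free_vertex_with_high_neighbors_general {U V : Type*} [Fintype U]
    [Fintype V] (E : Set (U × V)) (l : ℕ)
    (haug : ∀ M ⊆ E, IsMatching M → (∃ u : U, ∀ v : V, (u, v) ∉ M) →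
      ∃ (u : ℕ → U) (v : ℕ → V) (m : ℕ), IsAugPath E M u v m ∧ m ≤ l)
    (t : AuctionTrace U V E) :
    (∀ (i : ℕ) (u : U), (∀ v : V, (u, v) ∉ t.M i) →
      (∀ w : V, (u, w) ∈ E → l + 1 ≤ t.h i w) →
      ∀ j, i ≤ j → ∀ (up : ℕ → U) (vp : ℕ → V) (m : ℕ),
        IsAugPath E (t.M j) up vp m → up 0 ≠ u) ∧
    (∀ (i : ℕ) (u : U), (∀ v : V, (u, v) ∉ t.M i) →
      ¬ ∀ w : V, (u, w) ∈ E → l + 1 ≤ t.h i w) := by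
  have never_high : ∀ (i : ℕ) (u : U), (∀ v : V, (u, v) ∉ t.M i) →
      ¬ ∀ w : V, (u, w) ∈ E → l + 1 ≤ t.h i w := fun i u hu hhigh =>
    not_noShortAugPathFrom haug (t.M_subset i) (t.epsComplementary i).isMatching hu
      ((t.epsComplementary i).noShortAugPathFrom hhigh)
  exact ⟨fun i u hu hhigh => (never_high i u hu hhigh).elim, never_high⟩

/-- Let `G = (U, V, E)` be bipartite with `|U| = |V| = N`
containing a perfect matching, and suppose every non-perfect matching admits
an augmenting path of length at most `2 l + 1` (parameter `m ≤ l`).  Then: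
(a) if at some iteration `i` a free vertex `u` satisfies `n_u ⊆ D_{l+1}(i)`,
then `u` is never the starting vertex of an augmenting path at any later
iteration `j ≥ i`; and (b) (since this contradicts the existence of a perfect
matching) no free vertex `u` ever has `n_u ⊆ D_{l+1}(i)`. -/
theorem no_free_vertex_with_high_neighbors {U V : Type*} [Fintype U]
    [Fintype V] (N : ℕ) (hU : Fintype.card U = N) (hV : Fintype.card V = N)
    (E : Set (U × V)) (l : ℕ)
    (hperfect : ∃ P ⊆ E, IsMatching P ∧ ∀ u : U, ∃ v : V, (u, v) ∈ P)
    (haug : ∀ M ⊆ E, IsMatching M → (∃ u : U, ∀ v : V, (u, v) ∉ M) →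
      ∃ (u : ℕ → U) (v : ℕ → V) (m : ℕ), IsAugPath E M u v m ∧ m ≤ l)
    (t : AuctionTrace U V E) :
    (∀ (i : ℕ) (u : U), (∀ v : V, (u, v) ∉ t.M i) →
      (∀ w : V, (u, w) ∈ E → l + 1 ≤ t.h i w) →
      ∀ j, i ≤ j → ∀ (up : ℕ → U) (vp : ℕ → V) (m : ℕ),
        IsAugPath E (t.M j) up vp m → up 0 ≠ u) ∧
    (∀ (i : ℕ) (u : U), (∀ v : V, (u, v) ∉ t.M i) →
      ¬ ∀ w : V, (u, w) ∈ E → l + 1 ≤ t.h i w) :=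
  no_free_vertex_with_high_neighbors_general E l haug t
end
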